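/- If c : ℝ → ℝ is smooth with c(τ)=1 for |τ|≤1 and c(τ)=0 for |τ|≥2, and n ≥ 2 is an integer, then for all nonnegative integers l, k there is a constant C such that for all ξ = (ξ₁,ξ₂) ∈ ℝ², |∂_{ξ₂}^l ∂_{ξ₁}^k (1 - c(ξ₂ⁿ/⟨ξ⟩))| ≤ C ⟨ξ₁⟩^{-l/n - k}, where ⟨ξ⟩ = (1+|ξ|²)^{1/2}. -/

import Mathlib

noncomputable def genF (c : ℝ → ℝ) (n m a b e : ℕ) : ℝ → ℝ → ℝ :=
  fun x y => iteratedDeriv m c (y ^ n / Real.sqrt (1 + x ^ 2 + y ^ 2)) *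
    (x ^ a * y ^ b / Real.sqrt (1 + x ^ 2 + y ^ 2) ^ e)

lemma spos (x y : ℝ) : (0:ℝ) < 1 + x ^ 2 + y ^ 2 := by positivity

lemma rpos (x y : ℝ) : 0 < Real.sqrt (1 + x ^ 2 + y ^ 2) :=
  Real.sqrt_pos.2 (spos x y)

lemma hasDerivAt_sqrt_x (x y : ℝ) :
    HasDerivAt (fun x' : ℝ => Real.sqrt (1 + x' ^ 2 + y ^ 2))
      (x / Real.sqrt (1 + x ^ 2 + y ^ 2)) x := by
  have h1 : HasDerivAt (fun x' : ℝ => 1 + x' ^ 2 + y ^ 2) (2 * x) x := by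
    have := ((hasDerivAt_pow 2 x).const_add 1).add_const (y ^ 2)
    simpa using this
  have h2 := (Real.hasDerivAt_sqrt (spos x y).ne').comp x h1
  refine h2.congr_deriv ?_
  have := (rpos x y).ne'
  field_simp

lemma hasDerivAt_sqrt_y (x y : ℝ) :
    HasDerivAt (fun y' : ℝ => Real.sqrt (1 + x ^ 2 + y' ^ 2))
      (y / Real.sqrt (1 + x ^ 2 + y ^ 2)) y := by
  have h1 : HasDerivAt (fun y' : ℝ => 1 + x ^ 2 + y' ^ 2) (2 * y) y := by
    have := ((hasDerivAt_pow 2 y).const_add (1 + x ^ 2))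
    refine this.congr_deriv ?_
    norm_num
  have h2 := (Real.hasDerivAt_sqrt (spos x y).ne').comp y h1
  refine h2.congr_deriv ?_
  have := (rpos x y).ne'
  field_simp

lemma hasDerivAt_iteratedDeriv {c : ℝ → ℝ} (hc : ContDiff ℝ (⊤ : ℕ∞) c) (m : ℕ) (t : ℝ) :
    HasDerivAt (iteratedDeriv m c) (iteratedDeriv (m + 1) c t) t := by
  have h := (hc.differentiable_iteratedDeriv (m + 1) (by exact_mod_cast lt_top_iff_ne_top.2 (by simp))) t
  have h2 := ((hc.differentiable_iteratedDeriv m (by exact_mod_cast lt_top_iff_ne_top.2 (by simp))) t).hasDerivAt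
  rw [iteratedDeriv_succ]
  exact h2

lemma hasDerivAt_genF_x {c : ℝ → ℝ} (hc : ContDiff ℝ (⊤ : ℕ∞) c) (n m a b e : ℕ) (x y : ℝ) :
    HasDerivAt (fun x' => genF c n m a b e x' y)
      ((-1 : ℝ) * genF c n (m+1) (a+1) (b+n) (e+3) x y
        + (a : ℝ) * genF c n m (a-1) b e x y
        + (-(e : ℝ)) * genF c n m (a+1) b (e+2) x y) x := by
  have hρ := rpos x y
  have hρne := hρ.ne'
  have hR := hasDerivAt_sqrt_x x y
  have hg : HasDerivAt (fun x' => y ^ n / Real.sqrt (1 + x' ^ 2 + y ^ 2))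
      ((0 * Real.sqrt (1 + x ^ 2 + y ^ 2) - y ^ n * (x / Real.sqrt (1 + x ^ 2 + y ^ 2)))
        / Real.sqrt (1 + x ^ 2 + y ^ 2) ^ 2) x :=
    (hasDerivAt_const x (y ^ n)).div hR hρne
  have hcm := (hasDerivAt_iteratedDeriv hc m (y ^ n / Real.sqrt (1 + x ^ 2 + y ^ 2))).comp x hg
  have hN : HasDerivAt (fun x' : ℝ => x' ^ a * y ^ b) ((a * x ^ (a-1)) * y ^ b) x :=
    (hasDerivAt_pow a x).mul_const _
  have hD : HasDerivAt (fun x' => Real.sqrt (1 + x' ^ 2 + y ^ 2) ^ e)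
      (e * Real.sqrt (1 + x ^ 2 + y ^ 2) ^ (e-1) * (x / Real.sqrt (1 + x ^ 2 + y ^ 2))) x :=
    hR.pow e
  have hT := hcm.mul (hN.div hD (pow_ne_zero e hρne))
  refine hT.congr_deriv ?_
  simp only [genF, Function.comp, Pi.div_apply]
  obtain ⟨ρ, hρdef⟩ : ∃ ρ, Real.sqrt (1 + x ^ 2 + y ^ 2) = ρ := ⟨_, rfl⟩
  rw [hρdef] at hρne ⊢
  rcases a with _ | a <;> rcases e with _ | e <;>
    · push_cast
      try simp only [Nat.add_sub_cancel, Nat.succ_sub_one, Nat.zero_sub, pow_zero]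
      field_simp
      ring

lemma hasDerivAt_genF_y {c : ℝ → ℝ} (hc : ContDiff ℝ (⊤ : ℕ∞) c) (n m a b e : ℕ) (hn : 1 ≤ n) (x y : ℝ) :
    HasDerivAt (fun y' => genF c n m a b e x y')
      ((n : ℝ) * genF c n (m+1) a (b+(n-1)) (e+1) x y
        + (-1 : ℝ) * genF c n (m+1) a (b+n+1) (e+3) x y
        + (b : ℝ) * genF c n m a (b-1) e x y
        + (-(e : ℝ)) * genF c n m a (b+1) (e+2) x y) y := by
  have hρ := rpos x y
  have hρne := hρ.ne'
  have hR := hasDerivAt_sqrt_y x y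
  have hg : HasDerivAt (fun y' => y' ^ n / Real.sqrt (1 + x ^ 2 + y' ^ 2))
      (((n * y ^ (n-1)) * Real.sqrt (1 + x ^ 2 + y ^ 2)
          - y ^ n * (y / Real.sqrt (1 + x ^ 2 + y ^ 2)))
        / Real.sqrt (1 + x ^ 2 + y ^ 2) ^ 2) y :=
    (hasDerivAt_pow n y).div hR hρne
  have hcm := (hasDerivAt_iteratedDeriv hc m (y ^ n / Real.sqrt (1 + x ^ 2 + y ^ 2))).comp y hg
  have hN : HasDerivAt (fun y' : ℝ => x ^ a * y' ^ b) (x ^ a * (b * y ^ (b-1))) y :=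
    (hasDerivAt_pow b y).const_mul _
  have hD : HasDerivAt (fun y' => Real.sqrt (1 + x ^ 2 + y' ^ 2) ^ e)
      (e * Real.sqrt (1 + x ^ 2 + y ^ 2) ^ (e-1) * (y / Real.sqrt (1 + x ^ 2 + y ^ 2))) y :=
    hR.pow e
  have hT := hcm.mul (hN.div hD (pow_ne_zero e hρne))
  refine hT.congr_deriv ?_
  simp only [genF, Function.comp, Pi.div_apply]
  obtain ⟨ρ, hρdef⟩ : ∃ ρ, Real.sqrt (1 + x ^ 2 + y ^ 2) = ρ := ⟨_, rfl⟩
  rw [hρdef] at hρne ⊢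
  obtain ⟨n', rfl⟩ : ∃ n', n = n' + 1 := ⟨n - 1, (Nat.succ_pred_eq_of_pos hn).symm⟩
  rcases b with _ | b <;> rcases e with _ | e <;>
    · push_cast
      try simp only [Nat.add_sub_cancel, Nat.succ_sub_one, Nat.zero_sub, pow_zero]
      field_simp
      ring

inductive Good (c : ℝ → ℝ) (n : ℕ) : ℝ → (ℝ → ℝ → ℝ) → Prop
  | gen (d : ℝ) (m a b e : ℕ) (hm : 1 ≤ m) (hd : d ≤ (e : ℝ) - a - (b : ℝ) / n) :
      Good c n d (genF c n m a b e)
  | add {d : ℝ} {F G : ℝ → ℝ → ℝ} : Good c n d F → Good c n d G →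
      Good c n d (fun x y => F x y + G x y)
  | smul {d : ℝ} {F : ℝ → ℝ → ℝ} (r : ℝ) : Good c n d F → Good c n d (fun x y => r * F x y)

lemma Good.congr {c : ℝ → ℝ} {n : ℕ} {d : ℝ} {F G : ℝ → ℝ → ℝ} (h : Good c n d F)
    (hFG : ∀ x y, F x y = G x y) : Good c n d G := by
  have : F = G := funext fun x => funext fun y => hFG x y
  exact this ▸ h

lemma Good.mono_aux {c : ℝ → ℝ} {n : ℕ} {d : ℝ} {F : ℝ → ℝ → ℝ} (h : Good c n d F) :
    ∀ d', d' ≤ d → Good c n d' F := by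
  induction h with
  | gen m a b e hm hdd => exact fun d' hle => Good.gen d' m a b e hm (le_trans hle hdd)
  | add hF hG ihF ihG => exact fun d' hle => Good.add (ihF d' hle) (ihG d' hle)
  | smul r hF ih => exact fun d' hle => Good.smul r (ih d' hle)

lemma Good.mono {c : ℝ → ℝ} {n : ℕ} {d d' : ℝ} {F : ℝ → ℝ → ℝ} (h : Good c n d F)
    (hd : d' ≤ d) : Good c n d' F := h.mono_aux d' hd

lemma Good.derivX {c : ℝ → ℝ} {n : ℕ} (hc : ContDiff ℝ (⊤ : ℕ∞) c) (hn : 1 ≤ n) {d : ℝ}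
    {F : ℝ → ℝ → ℝ} (h : Good c n d F) :
    ∃ F', Good c n (d + 1) F' ∧ ∀ x y, HasDerivAt (fun x' => F x' y) (F' x y) x := by
  have hn0 : (n : ℝ) ≠ 0 := Nat.cast_ne_zero.2 (by omega)
  have h1 : ((n : ℝ)) / n = 1 := div_self hn0
  have h2 : (1 : ℝ) / n ≤ 1 := by
    rw [div_le_one (by positivity)]; exact_mod_cast hn
  induction h with
  | gen m a b e hm hd =>
    refine ⟨fun x y => (-1 : ℝ) * genF c n (m+1) (a+1) (b+n) (e+3) x y
        + (a : ℝ) * genF c n m (a-1) b e x y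
        + (-(e : ℝ)) * genF c n m (a+1) b (e+2) x y, ?_,
      fun x y => hasDerivAt_genF_x hc n m a b e x y⟩
    apply Good.add
    apply Good.add
    · exact Good.smul _ (Good.gen _ (m+1) (a+1) (b+n) (e+3) (by omega)
        (by push_cast [add_div, sub_div] at hd ⊢; linarith))
    · rcases a with _ | a
      · exact (Good.smul 0 (Good.gen _ (m+1) (0+1) (b+n) (e+3) (by omega)
          (by push_cast [add_div, sub_div] at hd ⊢; linarith))).congr (by intro x y; simp)
      · exact Good.smul _ (Good.gen _ m (a+1-1) b e (by omega)
          (by simp only [Nat.add_sub_cancel]; push_cast [add_div, sub_div] at hd ⊢; linarith))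
    · exact Good.smul _ (Good.gen _ m (a+1) b (e+2) (by omega)
        (by push_cast [add_div, sub_div] at hd ⊢; linarith))
  | add hF hG ihF ihG =>
    obtain ⟨F', hF', hdF⟩ := ihF
    obtain ⟨G', hG', hdG⟩ := ihG
    exact ⟨fun x y => F' x y + G' x y, Good.add hF' hG',
      fun x y => (hdF x y).add (hdG x y)⟩
  | smul r hF ih =>
    obtain ⟨F', hF', hdF⟩ := ih
    exact ⟨fun x y => r * F' x y, Good.smul r hF', fun x y => (hdF x y).const_mul r⟩

lemma Good.derivY {c : ℝ → ℝ} {n : ℕ} (hc : ContDiff ℝ (⊤ : ℕ∞) c) (hn : 1 ≤ n) {d : ℝ}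
    {F : ℝ → ℝ → ℝ} (h : Good c n d F) :
    ∃ F', Good c n (d + 1 / n) F' ∧ ∀ x y, HasDerivAt (fun y' => F x y') (F' x y) y := by
  have hn0 : (n : ℝ) ≠ 0 := Nat.cast_ne_zero.2 (by omega)
  have h1 : ((n : ℝ)) / n = 1 := div_self hn0
  have h2 : (1 : ℝ) / n ≤ 1 := by
    rw [div_le_one (by positivity)]; exact_mod_cast hn
  have hcast : ((n - 1 : ℕ) : ℝ) = (n : ℝ) - 1 := by
    rw [Nat.cast_sub hn]; simp
  induction h with
  | gen m a b e hm hd =>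
    refine ⟨fun x y => (n : ℝ) * genF c n (m+1) a (b+(n-1)) (e+1) x y
        + (-1 : ℝ) * genF c n (m+1) a (b+n+1) (e+3) x y
        + (b : ℝ) * genF c n m a (b-1) e x y
        + (-(e : ℝ)) * genF c n m a (b+1) (e+2) x y, ?_,
      fun x y => hasDerivAt_genF_y hc n m a b e hn x y⟩
    apply Good.add
    apply Good.add
    apply Good.add
    · exact Good.smul _ (Good.gen _ (m+1) a (b+(n-1)) (e+1) (by omega)
        (by push_cast [hcast, add_div, sub_div] at hd ⊢; linarith))
    · exact Good.smul _ (Good.gen _ (m+1) a (b+n+1) (e+3) (by omega)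
        (by push_cast [add_div, sub_div] at hd ⊢; linarith))
    · rcases b with _ | b
      · exact (Good.smul 0 (Good.gen _ (m+1) a (0+n+1) (e+3) (by omega)
          (by push_cast [add_div, sub_div] at hd ⊢; linarith))).congr (by intro x y; simp)
      · exact Good.smul _ (Good.gen _ m a (b+1-1) e (by omega)
          (by simp only [Nat.add_sub_cancel]; push_cast [add_div, sub_div] at hd ⊢; linarith))
    · exact Good.smul _ (Good.gen _ m a (b+1) (e+2) (by omega)
        (by push_cast [add_div, sub_div] at hd ⊢; linarith))
  | add hF hG ihF ihG =>
    obtain ⟨F', hF', hdF⟩ := ihF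
    obtain ⟨G', hG', hdG⟩ := ihG
    exact ⟨fun x y => F' x y + G' x y, Good.add hF' hG',
      fun x y => (hdF x y).add (hdG x y)⟩
  | smul r hF ih =>
    obtain ⟨F', hF', hdF⟩ := ih
    exact ⟨fun x y => r * F' x y, Good.smul r hF', fun x y => (hdF x y).const_mul r⟩

lemma iteratedDeriv_zero_fun (j : ℕ) : iteratedDeriv j (fun _ : ℝ => (0:ℝ)) = fun _ => 0 := by
  induction j with
  | zero => simp [iteratedDeriv_zero]
  | succ j ih => rw [iteratedDeriv_succ', deriv_const']; exact ih

lemma iteratedDeriv_const_fun (j : ℕ) (hj : 1 ≤ j) (r : ℝ) :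
    iteratedDeriv j (fun _ : ℝ => r) = fun _ => 0 := by
  obtain ⟨j', rfl⟩ : ∃ j', j = j' + 1 := ⟨j - 1, by omega⟩
  rw [iteratedDeriv_succ', deriv_const']
  exact iteratedDeriv_zero_fun j'

lemma vanish {c : ℝ → ℝ} (hc1 : ∀ τ : ℝ, |τ| ≤ 1 → c τ = 1) (hc0 : ∀ τ : ℝ, 2 ≤ |τ| → c τ = 0)
    (m : ℕ) (hm : 1 ≤ m) (t : ℝ) (h : |t| < 1 ∨ 2 < |t|) : iteratedDeriv m c t = 0 := by
  rcases h with h | h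
  · have hev : c =ᶠ[nhds t] fun _ => (1:ℝ) := by
      have : {s : ℝ | |s| < 1} ∈ nhds t := by
        refine (isOpen_lt (by fun_prop) (by fun_prop)).mem_nhds ?_
        simpa using h
      filter_upwards [this] with s hs
      exact hc1 s (le_of_lt hs)
    rw [hev.iteratedDeriv_eq m, iteratedDeriv_const_fun m hm 1]
  · have hev : c =ᶠ[nhds t] fun _ => (0:ℝ) := by
      have : {s : ℝ | 2 < |s|} ∈ nhds t := by
        refine (isOpen_lt (by fun_prop) (by fun_prop)).mem_nhds ?_
        simpa using h
      filter_upwards [this] with s hs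
      exact hc0 s (le_of_lt hs)
    rw [hev.iteratedDeriv_eq m, iteratedDeriv_zero_fun m]

lemma cderiv_bound {c : ℝ → ℝ} (hc : ContDiff ℝ (⊤ : ℕ∞) c)
    (hc1 : ∀ τ : ℝ, |τ| ≤ 1 → c τ = 1) (hc0 : ∀ τ : ℝ, 2 ≤ |τ| → c τ = 0) (m : ℕ) :
    ∃ M : ℝ, 0 ≤ M ∧ ∀ t, |iteratedDeriv m c t| ≤ M := by
  have hcont := hc.continuous_iteratedDeriv m (by exact_mod_cast (le_top : (m : ℕ∞) ≤ ⊤))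
  have hsupp : HasCompactSupport (iteratedDeriv m c) := by
    apply HasCompactSupport.intro (isCompact_Icc (a := (-2:ℝ)) (b := 2))
    intro t ht
    have h2 : 2 < |t| := by
      simp only [Set.mem_Icc, not_and, not_le] at ht
      rcases lt_or_ge t (-2) with h | h
      · rw [abs_of_neg (by linarith)]; linarith
      · have := ht h
        rw [abs_of_pos (by linarith)]; linarith
    rcases Nat.eq_zero_or_pos m with rfl | hm
    · rw [iteratedDeriv_zero]; exact hc0 t h2.le
    · exact vanish hc1 hc0 m hm t (Or.inr h2)
  obtain ⟨M, hM⟩ := hsupp.exists_bound_of_continuous hcont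
  exact ⟨max M 0, le_max_right _ _, fun t => by
    have := hM t
    rw [Real.norm_eq_abs] at this
    exact le_trans this (le_max_left _ _)⟩

lemma Good.bound {c : ℝ → ℝ} {n : ℕ} (hc : ContDiff ℝ (⊤ : ℕ∞) c)
    (hc1 : ∀ τ : ℝ, |τ| ≤ 1 → c τ = 1) (hc0 : ∀ τ : ℝ, 2 ≤ |τ| → c τ = 0)
    (hn : 1 ≤ n) {d : ℝ} {F : ℝ → ℝ → ℝ} (h : Good c n d F) :
    0 ≤ d → ∃ C : ℝ, 0 < C ∧ ∀ x y : ℝ, |F x y| ≤ C * Real.sqrt (1 + x ^ 2) ^ (-d) := by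
  induction h with
  | gen m a b e hm hd =>
    intro hd0
    obtain ⟨M, hM0, hM⟩ := cderiv_bound hc hc1 hc0 m
    refine ⟨(M + 1) * 2 ^ ((b : ℝ) / n), by positivity, fun x y => ?_⟩
    have hρpos := rpos x y
    have hxpos : (0:ℝ) < Real.sqrt (1 + x ^ 2) := Real.sqrt_pos.2 (by positivity)
    have hρ1 : 1 ≤ Real.sqrt (1 + x ^ 2 + y ^ 2) := by
      calc (1:ℝ) = Real.sqrt 1 := Real.sqrt_one.symm
      _ ≤ Real.sqrt (1 + x ^ 2 + y ^ 2) :=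
        Real.sqrt_le_sqrt (by nlinarith [sq_nonneg x, sq_nonneg y])
    set ρ := Real.sqrt (1 + x ^ 2 + y ^ 2) with hρdef
    have habs : |y ^ n / ρ| = |y| ^ n / ρ := by
      rw [abs_div, abs_pow, abs_of_pos hρpos]
    by_cases hcase : 1 ≤ |y ^ n / ρ| ∧ |y ^ n / ρ| ≤ 2
    · have hyn1 : ρ ≤ |y| ^ n := by
        have := hcase.1; rw [habs] at this
        exact (one_le_div hρpos).1 this
      have hyn2 : |y| ^ n ≤ 2 * ρ := by
        have := hcase.2; rw [habs] at this
        calc |y| ^ n = |y| ^ n / ρ * ρ := by field_simp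
        _ ≤ 2 * ρ := by nlinarith
      have hx : |x| ≤ ρ := by
        rw [← Real.sqrt_sq_eq_abs]
        exact Real.sqrt_le_sqrt (by nlinarith [sq_nonneg y])
      have hy : |y| ≤ (2 * ρ) ^ ((n : ℝ)⁻¹) := by
        rw [show |y| = (|y| ^ n) ^ ((n : ℝ)⁻¹) from
          (Real.pow_rpow_inv_natCast (abs_nonneg y) (by omega)).symm]
        exact Real.rpow_le_rpow (by positivity) hyn2 (by positivity)
      calc |genF c n m a b e x y|
          ≤ M * (ρ ^ a * ((2 * ρ) ^ ((n : ℝ)⁻¹)) ^ b / ρ ^ e) := by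
            simp only [genF, ← hρdef]
            rw [abs_mul, abs_div, abs_mul, abs_pow, abs_pow, abs_pow, abs_of_pos hρpos]
            gcongr
            all_goals first
              | exact hM _
              | exact hx
              | exact hy
              | positivity
        _ = M * 2 ^ ((b : ℝ) / n) * ρ ^ ((a : ℝ) + (b : ℝ) / n - e) := by
            have e1 : ρ ^ ((a:ℝ) + (b:ℝ)/n - (e:ℝ)) = ρ ^ ((a:ℝ)) * ρ ^ ((b:ℝ)/n) / ρ ^ ((e:ℝ)) := by
              rw [Real.rpow_sub hρpos, Real.rpow_add hρpos]
            rw [Real.mul_rpow (by norm_num) hρpos.le]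
            rw [mul_pow, ← Real.rpow_natCast ((2:ℝ) ^ ((n:ℝ)⁻¹)) b,
              ← Real.rpow_natCast (ρ ^ ((n:ℝ)⁻¹)) b,
              ← Real.rpow_mul (by norm_num : (0:ℝ) ≤ 2),
              ← Real.rpow_mul hρpos.le,
              ← Real.rpow_natCast ρ a, ← Real.rpow_natCast ρ e, e1,
              show (n:ℝ)⁻¹ * b = (b:ℝ)/n by ring]
            ring
        _ ≤ (M + 1) * 2 ^ ((b : ℝ) / n) * ρ ^ (-d) := by
            have e2 : ρ ^ ((a:ℝ) + (b:ℝ)/n - (e:ℝ)) ≤ ρ ^ (-d) :=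
              Real.rpow_le_rpow_of_exponent_le hρ1 (by linarith)
            have e3 : (0:ℝ) ≤ ρ ^ ((a:ℝ) + (b:ℝ)/n - (e:ℝ)) := (Real.rpow_pos_of_pos hρpos _).le
            have e4 : (0:ℝ) < (2:ℝ) ^ ((b:ℝ)/n) := by positivity
            nlinarith [mul_le_mul_of_nonneg_left e2 (mul_nonneg (by linarith : (0:ℝ) ≤ M + 1) e4.le),
              mul_le_mul_of_nonneg_right (by linarith : M ≤ M + 1) (mul_nonneg e4.le e3)]
        _ ≤ (M + 1) * 2 ^ ((b : ℝ) / n) * Real.sqrt (1 + x ^ 2) ^ (-d) := by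
            have hle : Real.sqrt (1 + x ^ 2) ≤ ρ := by
              rw [hρdef]
              exact Real.sqrt_le_sqrt (by nlinarith [sq_nonneg y])
            exact mul_le_mul_of_nonneg_left
              (Real.rpow_le_rpow_of_nonpos hxpos hle (neg_nonpos.mpr hd0)) (by positivity)
    · have hvan : iteratedDeriv m c (y ^ n / ρ) = 0 := by
        apply vanish hc1 hc0 m hm
        rcases not_and_or.1 hcase with h | h <;> push_neg at h
        · exact Or.inl h
        · exact Or.inr h
      simp only [genF, ← hρdef, hvan, zero_mul, abs_zero]
      positivity
  | add hF hG ihF ihG =>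
    intro hd0
    obtain ⟨C1, hC1, hb1⟩ := ihF hd0
    obtain ⟨C2, hC2, hb2⟩ := ihG hd0
    exact ⟨C1 + C2, by positivity, fun x y => by
      calc |_ + _| ≤ _ := abs_add_le _ _
      _ ≤ C1 * Real.sqrt (1 + x ^ 2) ^ (-d) + C2 * Real.sqrt (1 + x ^ 2) ^ (-d) :=
          add_le_add (hb1 x y) (hb2 x y)
      _ = (C1 + C2) * Real.sqrt (1 + x ^ 2) ^ (-d) := by ring⟩
  | smul r hF ih =>
    intro hd0
    obtain ⟨C, hC, hb⟩ := ih hd0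
    exact ⟨(|r| + 1) * C, by positivity, fun x y => by
      rw [abs_mul]
      calc |r| * |_| ≤ (|r| + 1) * (C * Real.sqrt (1 + x ^ 2) ^ (-d)) := by
            apply mul_le_mul (by linarith [abs_nonneg r]) (hb x y) (abs_nonneg _) (by positivity)
      _ = (|r| + 1) * C * Real.sqrt (1 + x ^ 2) ^ (-d) := by ring⟩

lemma hasDerivAt_f_x {c : ℝ → ℝ} (hc : ContDiff ℝ (⊤ : ℕ∞) c) (n : ℕ) (x y : ℝ) :
    HasDerivAt (fun x' => 1 - c (y ^ n / Real.sqrt (1 + x' ^ 2 + y ^ 2)))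
      (genF c n 1 1 n 3 x y) x := by
  have hρ := rpos x y
  have hρne := hρ.ne'
  have hR := hasDerivAt_sqrt_x x y
  have hg : HasDerivAt (fun x' => y ^ n / Real.sqrt (1 + x' ^ 2 + y ^ 2))
      ((0 * Real.sqrt (1 + x ^ 2 + y ^ 2) - y ^ n * (x / Real.sqrt (1 + x ^ 2 + y ^ 2)))
        / Real.sqrt (1 + x ^ 2 + y ^ 2) ^ 2) x :=
    (hasDerivAt_const x (y ^ n)).div hR hρne
  have hcd := hasDerivAt_iteratedDeriv hc 0 (y ^ n / Real.sqrt (1 + x ^ 2 + y ^ 2))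
  rw [iteratedDeriv_zero] at hcd
  have hT := (hcd.comp x hg).const_sub 1
  refine hT.congr_deriv ?_
  simp only [genF, Function.comp, Pi.div_apply]
  obtain ⟨ρ, hρdef⟩ : ∃ ρ, Real.sqrt (1 + x ^ 2 + y ^ 2) = ρ := ⟨_, rfl⟩
  rw [hρdef] at hρne ⊢
  field_simp
  ring

lemma hasDerivAt_f_y {c : ℝ → ℝ} (hc : ContDiff ℝ (⊤ : ℕ∞) c) (n : ℕ) (hn : 1 ≤ n) (x y : ℝ) :
    HasDerivAt (fun y' => 1 - c (y' ^ n / Real.sqrt (1 + x ^ 2 + y' ^ 2)))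
      ((-(n : ℝ)) * genF c n 1 0 (n-1) 1 x y + genF c n 1 0 (n+1) 3 x y) y := by
  have hρ := rpos x y
  have hρne := hρ.ne'
  have hR := hasDerivAt_sqrt_y x y
  have hg : HasDerivAt (fun y' => y' ^ n / Real.sqrt (1 + x ^ 2 + y' ^ 2))
      (((n * y ^ (n-1)) * Real.sqrt (1 + x ^ 2 + y ^ 2)
          - y ^ n * (y / Real.sqrt (1 + x ^ 2 + y ^ 2)))
        / Real.sqrt (1 + x ^ 2 + y ^ 2) ^ 2) y :=
    (hasDerivAt_pow n y).div hR hρne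
  have hcd := hasDerivAt_iteratedDeriv hc 0 (y ^ n / Real.sqrt (1 + x ^ 2 + y ^ 2))
  rw [iteratedDeriv_zero] at hcd
  have hT := (hcd.comp y hg).const_sub 1
  refine hT.congr_deriv ?_
  simp only [genF, Function.comp, Pi.div_apply]
  obtain ⟨ρ, hρdef⟩ : ∃ ρ, Real.sqrt (1 + x ^ 2 + y ^ 2) = ρ := ⟨_, rfl⟩
  rw [hρdef] at hρne ⊢
  obtain ⟨n', rfl⟩ : ∃ n', n = n' + 1 := ⟨n - 1, by omega⟩
  simp only [Nat.add_sub_cancel]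
  push_cast
  field_simp
  ring

lemma iterX {c : ℝ → ℝ} {n : ℕ} (hc : ContDiff ℝ (⊤ : ℕ∞) c) (hn : 1 ≤ n) (j : ℕ) {d : ℝ}
    {F : ℝ → ℝ → ℝ} (h : Good c n d F) :
    ∃ G, Good c n (d + j) G ∧ ∀ x y, iteratedDeriv j (fun x' => F x' y) x = G x y := by
  induction j generalizing d F with
  | zero =>
    exact ⟨F, h.mono (by norm_num), fun x y => by rw [iteratedDeriv_zero]⟩
  | succ j ih =>
    obtain ⟨F', hF', hdF⟩ := h.derivX hc hn
    obtain ⟨G, hG, hrep⟩ := ih hF'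
    refine ⟨G, hG.mono (le_of_eq (by push_cast; ring)), fun x y => ?_⟩
    rw [iteratedDeriv_succ',
      show deriv (fun x' => F x' y) = fun x' => F' x' y from funext fun x' => (hdF x' y).deriv]
    exact hrep x y

lemma iterY {c : ℝ → ℝ} {n : ℕ} (hc : ContDiff ℝ (⊤ : ℕ∞) c) (hn : 1 ≤ n) (j : ℕ) {d : ℝ}
    {F : ℝ → ℝ → ℝ} (h : Good c n d F) :
    ∃ G, Good c n (d + j / n) G ∧ ∀ x y, iteratedDeriv j (fun y' => F x y') y = G x y := by
  induction j generalizing d F with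
  | zero =>
    exact ⟨F, h.mono (by norm_num), fun x y => by rw [iteratedDeriv_zero]⟩
  | succ j ih =>
    obtain ⟨F', hF', hdF⟩ := h.derivY hc hn
    obtain ⟨G, hG, hrep⟩ := ih hF'
    refine ⟨G, hG.mono (le_of_eq ?_), fun x y => ?_⟩
    · push_cast
      have hn0 : (n : ℝ) ≠ 0 := Nat.cast_ne_zero.2 (by omega)
      field_simp
      ring
    rw [iteratedDeriv_succ',
      show deriv (fun y' => F x y') = fun y' => F' x y' from funext fun y' => (hdF x y').deriv]
    exact hrep x y

/-- Estimates for derivatives of the nonlinear cutoff `1 - c(ξ₂ⁿ/⟨ξ⟩)`. -/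
theorem stmt0 (c : ℝ → ℝ) (hc : ContDiff ℝ (⊤ : ℕ∞) c)
    (hc1 : ∀ τ : ℝ, |τ| ≤ 1 → c τ = 1) (hc0 : ∀ τ : ℝ, 2 ≤ |τ| → c τ = 0)
    (n : ℕ) (hn : 2 ≤ n) (l k : ℕ) :
    ∃ C : ℝ, 0 < C ∧ ∀ ξ₁ ξ₂ : ℝ,
      |iteratedDeriv l (fun y : ℝ => iteratedDeriv k
          (fun x : ℝ => 1 - c (y ^ n / Real.sqrt (1 + x ^ 2 + y ^ 2))) ξ₁) ξ₂|
        ≤ C * Real.sqrt (1 + ξ₁ ^ 2) ^ (-(l : ℝ) / n - k) := by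
  have hn1 : 1 ≤ n := by omega
  have hn0 : (n : ℝ) ≠ 0 := Nat.cast_ne_zero.2 (by omega)
  rcases k with _ | k'
  · rcases l with _ | l'
    · -- k = 0, l = 0
      obtain ⟨M, hM0, hM⟩ := cderiv_bound hc hc1 hc0 0
      simp only [iteratedDeriv_zero] at hM ⊢
      refine ⟨M + 2, by linarith, fun ξ₁ ξ₂ => ?_⟩
      have hexp : (-(0:ℕ) : ℝ) / n - (0:ℕ) = 0 := by push_cast; ring
      rw [hexp, Real.rpow_zero, mul_one]
      calc |1 - c (ξ₂ ^ n / Real.sqrt (1 + ξ₁ ^ 2 + ξ₂ ^ 2))|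
          ≤ |(1:ℝ)| + |c (ξ₂ ^ n / Real.sqrt (1 + ξ₁ ^ 2 + ξ₂ ^ 2))| := abs_sub _ _
        _ ≤ 1 + M := by rw [abs_one]; linarith [hM (ξ₂ ^ n / Real.sqrt (1 + ξ₁ ^ 2 + ξ₂ ^ 2))]
        _ ≤ M + 2 := by linarith
    · -- k = 0, l = l' + 1
      have hF2 : Good c n ((1:ℝ)/n) (fun x y => (-(n : ℝ)) * genF c n 1 0 (n-1) 1 x y
          + genF c n 1 0 (n+1) 3 x y) := by
        have hcast : ((n - 1 : ℕ) : ℝ) = (n : ℝ) - 1 := by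
          rw [Nat.cast_sub hn1]; simp
        have h2 : (1 : ℝ) / n ≤ 1 := by
          rw [div_le_one (by positivity)]; exact_mod_cast hn1
        have h1 : ((n : ℝ)) / n = 1 := div_self hn0
        apply Good.add
        · exact Good.smul _ (Good.gen _ 1 0 (n-1) 1 (le_refl 1)
            (by push_cast [hcast, sub_div]; linarith))
        · exact Good.gen _ 1 0 (n+1) 3 (le_refl 1)
            (by push_cast [add_div]; linarith)
      obtain ⟨G, hG, hrep⟩ := iterY hc hn1 l' hF2
      obtain ⟨C, hC, hbound⟩ := Good.bound hc hc1 hc0 hn1 hG (by positivity)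
      refine ⟨C, hC, fun ξ₁ ξ₂ => ?_⟩
      simp only [iteratedDeriv_zero]
      rw [iteratedDeriv_succ',
        show deriv (fun y => 1 - c (y ^ n / Real.sqrt (1 + ξ₁ ^ 2 + y ^ 2)))
            = fun y => (-(n : ℝ)) * genF c n 1 0 (n-1) 1 ξ₁ y + genF c n 1 0 (n+1) 3 ξ₁ y from
          funext fun y => (hasDerivAt_f_y hc n hn1 ξ₁ y).deriv]
      rw [hrep ξ₁ ξ₂]
      have hexp : (-(l'+1:ℕ) : ℝ) / n - ((0:ℕ):ℝ) = -((1:ℝ)/n + (l':ℝ)/n) := by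
        push_cast; field_simp; ring
      calc |G ξ₁ ξ₂| ≤ C * Real.sqrt (1 + ξ₁ ^ 2) ^ (-((1:ℝ)/n + (l':ℝ)/n)) := hbound ξ₁ ξ₂
        _ = C * Real.sqrt (1 + ξ₁ ^ 2) ^ ((-(l'+1:ℕ) : ℝ) / n - ((0:ℕ):ℝ)) := by rw [hexp]
  · -- k = k' + 1
    have hF1 : Good c n 1 (genF c n 1 1 n 3) := by
      refine Good.gen _ 1 1 n 3 (le_refl 1) ?_
      rw [div_self hn0]
      norm_num
    obtain ⟨Fk, hFk, hrepk⟩ := iterX hc hn1 k' hF1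
    obtain ⟨G, hG, hrepl⟩ := iterY hc hn1 l hFk
    obtain ⟨C, hC, hbound⟩ := Good.bound hc hc1 hc0 hn1 hG (by positivity)
    refine ⟨C, hC, fun ξ₁ ξ₂ => ?_⟩
    have hinner : (fun y => iteratedDeriv (k'+1)
        (fun x => 1 - c (y ^ n / Real.sqrt (1 + x ^ 2 + y ^ 2))) ξ₁) = fun y => Fk ξ₁ y := by
      funext y
      rw [iteratedDeriv_succ',
        show deriv (fun x => 1 - c (y ^ n / Real.sqrt (1 + x ^ 2 + y ^ 2)))
            = fun x => genF c n 1 1 n 3 x y from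
          funext fun x => (hasDerivAt_f_x hc n x y).deriv]
      exact hrepk ξ₁ y
    rw [hinner, hrepl ξ₁ ξ₂]
    have hexp : (-(l:ℕ) : ℝ) / n - ((k'+1:ℕ):ℝ) = -(1 + (k':ℝ) + (l:ℝ)/n) := by
      push_cast; ring
    rw [hexp]
    exact hbound ξ₁ ξ₂
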